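/- arXiv:2604.10913 — 4 statements merged into one kernel-verified Lean document; each statement's English description precedes it below -/
import Mathlib

section
/- Let 1 < α < β, 0 < λ_s < 1 < λ_u, λ_u (λ_s λ_u^3)^{αβ−1} > 1, and let N be large enough that λ_u^{-1}·(λ_u (λ_s λ_u^3)^{αβ−1})^{N} > 1. Then for every t ≥ 0 and every real n ≥ N, λ_u^{α(αβ)^t n − 1} · (λ_s λ_u^3)^{n (αβ)^t (αβ−1)} > 1. -/
theorem stmt_7 (α β lams lamu N : ℝ) (hα : 1 < α) (hαβ : α < β)
    (hs0 : 0 < lams) (hs1 : lams < 1) (hu : 1 < lamu)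
    (hkey : lamu * (lams * lamu^3) ^ (α*β - 1) > 1)
    (hN : lamu⁻¹ * (lamu * (lams * lamu^3) ^ (α*β - 1)) ^ N > 1) :
    ∀ t : ℕ, ∀ nn : ℝ, N ≤ nn →
      lamu ^ (α * (α*β)^t * nn - 1) * (lams * lamu^3) ^ (nn * (α*β)^t * (α*β - 1)) > 1 := by
  intro t nn hn
  have hlamu0 : (0:ℝ) < lamu := lt_trans one_pos hu
  have hA : (0:ℝ) < lams * lamu^3 := by positivity
  set A := lams * lamu^3 with hAdef
  set K := lamu * A ^ (α*β - 1) with hKdef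
  have hK : 1 < K := hkey
  have hKpos : (0:ℝ) < K := lt_trans one_pos hK
  have hinv : lamu * lamu⁻¹ = 1 := mul_inv_cancel₀ (ne_of_gt hlamu0)
  have hKN : lamu < K ^ N := by
    nlinarith [mul_lt_mul_of_pos_left hN hlamu0]
  have hN0 : 0 < N := by
    by_contra h
    push_neg at h
    have : K ^ N ≤ 1 := Real.rpow_le_one_of_one_le_of_nonpos hK.le h
    linarith
  have hab1 : 1 < α * β := by nlinarith
  have ht : 1 ≤ (α*β)^t := one_le_pow₀ hab1.le
  set m := (α*β)^t * nn with hm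
  have hnn0 : 0 < nn := lt_of_lt_of_le hN0 hn
  have hNm : N ≤ m := by
    have : nn ≤ m := by
      rw [hm]; nlinarith
    linarith
  have hm0 : 0 < m := lt_of_lt_of_le hN0 hNm
  have e1 : α * (α*β)^t * nn - 1 = (α-1)*m + (m-1) := by rw [hm]; ring
  have e2 : nn * (α*β)^t * (α*β-1) = (α*β-1) * m := by rw [hm]; ring
  rw [e1, e2, Real.rpow_add hlamu0, Real.rpow_mul hA.le]
  -- goal: lamu^((α-1)*m) * lamu^(m-1) * (A^(α*β-1))^m > 1
  have hX : 1 ≤ lamu ^ ((α-1)*m) := by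
    have h0 : (0:ℝ) ≤ (α-1)*m := by nlinarith
    calc (1:ℝ) = lamu ^ (0:ℝ) := (Real.rpow_zero lamu).symm
    _ ≤ lamu ^ ((α-1)*m) := Real.rpow_le_rpow_of_exponent_le hu.le h0
  have hKm : lamu < K ^ m := by
    calc lamu < K ^ N := hKN
    _ ≤ K ^ m := Real.rpow_le_rpow_of_exponent_le hK.le hNm
  have hPeq : lamu * (lamu ^ (m-1) * (A ^ (α*β-1)) ^ m) = K ^ m := by
    have h1 : lamu * lamu ^ (m-1) = lamu ^ m := by
      have := (Real.rpow_add hlamu0 1 (m-1)).symm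
      simpa using this
    rw [hKdef, Real.mul_rpow hlamu0.le (Real.rpow_nonneg hA.le _), ← mul_assoc, h1]
  have hP : 1 < lamu ^ (m-1) * (A ^ (α*β-1)) ^ m := by
    have := hKm
    rw [← hPeq] at this
    nlinarith [this, hlamu0]
  have hXpos : (0:ℝ) < lamu ^ ((α-1)*m) := Real.rpow_pos_of_pos hlamu0 _
  calc (1:ℝ) < lamu ^ (m-1) * (A ^ (α*β-1)) ^ m := hP
  _ ≤ lamu ^ ((α-1)*m) * (lamu ^ (m-1) * (A ^ (α*β-1)) ^ m) := by nlinarith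
  _ = lamu ^ ((α-1)*m) * lamu ^ (m-1) * (A ^ (α*β-1)) ^ m := by ring
end

section
/- Let 0 < λ_s < 1 < λ_u and let (n_j)_{j=0}^{m−1} be positive reals with n_{j+1} − n_j ≥ c (n_{j+1} + n_j) for all j, where c = (α−1)/(α+3) > 0. Then the alternating sum Σ_{j=0}^{m−1} (−1)^{m−1−j} n_j ≥ c Σ_{j=0}^{m−1} n_j, and consequently log(Λ_u^{(m)}/Λ_s^{(m)}) ≥ c · log(λ_u/λ_s) · Σ_{j=0}^{m−1} n_j, where Λ_u^{(m)}/Λ_s^{(m)} = (λ_u/λ_s)^{Σ_{j=0}^{m−1} (−1)^{m−1−j} n_j}. -/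
theorem stmt_11 (α lams lamu : ℝ) (hα : 1 < α)
    (hs0 : 0 < lams) (hs1 : lams < 1) (hu : 1 < lamu)
    (c : ℝ) (hc : c = (α-1)/(α+3))
    (n : ℕ → ℝ) (hpos : ∀ j, 0 < n j)
    (hgap : ∀ j, c * (n (j+1) + n j) ≤ n (j+1) - n j) :
    ∀ m : ℕ,
      c * ∑ j ∈ Finset.range m, n j
        ≤ ∑ j ∈ Finset.range m, (-1 : ℝ)^(m-1-j) * n j ∧
      c * Real.log (lamu/lams) * ∑ j ∈ Finset.range m, n j
        ≤ Real.log ((lamu/lams) ^ (∑ j ∈ Finset.range m, (-1 : ℝ)^(m-1-j) * n j)) := by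
  have hc0 : 0 < c := by rw [hc]; apply div_pos <;> linarith
  have hc1 : c < 1 := by rw [hc]; rw [div_lt_one (by linarith)]; linarith
  set A : ℕ → ℝ := fun m => ∑ j ∈ Finset.range m, (-1:ℝ)^(m-1-j) * n j with hA
  set S : ℕ → ℝ := fun m => ∑ j ∈ Finset.range m, n j with hS
  have hSsucc : ∀ m, S (m+1) = S m + n m := fun m => Finset.sum_range_succ n m
  have hAsucc : ∀ m, A (m+1) = n m - A m := by
    intro m
    simp only [hA]
    rw [Finset.sum_range_succ]
    have h1 : ∀ j ∈ Finset.range m, (-1:ℝ)^(m+1-1-j) * n j = -((-1:ℝ)^(m-1-j) * n j) := by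
      intro j hj
      simp only [Finset.mem_range] at hj
      have h2 : m+1-1-j = (m-1-j)+1 := by omega
      rw [h2, pow_succ]; ring
    rw [Finset.sum_congr rfl h1, Finset.sum_neg_distrib]
    have h3 : m+1-1-m = 0 := by omega
    rw [h3, pow_zero]
    ring
  have key : ∀ m, c * S m ≤ A m ∧ c * S (m+1) ≤ A (m+1) := by
    intro m
    induction m with
    | zero =>
      constructor
      · simp [hA, hS]
      · have := hpos 0
        rw [hAsucc, hSsucc]
        simp only [hA, hS, Finset.range_zero, Finset.sum_empty]
        nlinarith
    | succ k ih =>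
      refine ⟨ih.2, ?_⟩
      have hg := hgap k
      rw [hAsucc, hAsucc, hSsucc, hSsucc]
      have := ih.1
      nlinarith
  intro m
  refine ⟨(key m).1, ?_⟩
  have hr : 1 < lamu / lams := by
    rw [lt_div_iff₀ hs0]; nlinarith
  have hr0 : 0 < lamu / lams := by linarith
  rw [Real.log_rpow hr0]
  have hL : 0 ≤ Real.log (lamu/lams) := Real.log_nonneg (le_of_lt hr)
  calc c * Real.log (lamu/lams) * S m = (c * S m) * Real.log (lamu/lams) := by ring
    _ ≤ A m * Real.log (lamu/lams) := mul_le_mul_of_nonneg_right (key m).1 hL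
end

section
/- Let 1 < α < β and c := n_0 α^q β^q > 0 (q fixed). Suppose n_{2p} = c(αβ)^p + O(1) and n_{2p+1} = cα(αβ)^p + O(1) as p → ∞, and let S_m = Σ_{j=0}^{m−1} n_j. Suppose 0 < λ_s < 1 < λ_u and define L_{2m} = α log λ_u · c Σ_{j=0}^{m−1}(αβ)^j + log λ_s · c Σ_{j=0}^{m−1}(αβ)^j + O(m). Then lim_{m→∞} L_{2m}/S_{2m} = (α log λ_u + log λ_s)/(1+α). -/
open Filter Finset Real Topology

set_option maxHeartbeats 1000000 in
theorem stmt_12 (α β lams lamu : ℝ) (n0 q : ℕ) (hn0 : 0 < n0)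
    (hα : 1 < α) (hαβ : α < β)
    (hs0 : 0 < lams) (hs1 : lams < 1) (hu : 1 < lamu)
    (n : ℕ → ℤ)
    (heven : ∀ p : ℕ, n (2*p) = ⌊(n0 : ℝ) * α^(q+p) * β^(q+p)⌋)
    (hodd : ∀ p : ℕ, n (2*p+1) = ⌊(n0 : ℝ) * α^(q+p+1) * β^(q+p)⌋) :
    Filter.Tendsto
      (fun m : ℕ =>
        (∑ j ∈ Finset.range m,
          ((n (2*j+1) : ℝ) * Real.log lamu + (n (2*j) : ℝ) * Real.log lams))
        / (∑ j ∈ Finset.range (2*m), (n j : ℝ)))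
      Filter.atTop
      (nhds ((α * Real.log lamu + Real.log lams) / (1 + α))) := by
  have hβ : 1 < β := hα.trans hαβ
  set r : ℝ := α * β with hrdef
  have hr1 : 1 < r := by nlinarith
  have hrpos : 0 < r := by linarith
  set c : ℝ := (n0 : ℝ) * α ^ q * β ^ q with hcdef
  have hn0' : (0:ℝ) < n0 := by exact_mod_cast hn0
  have hαpos : (0:ℝ) < α := by linarith
  have hβpos : (0:ℝ) < β := by linarith
  have hc : 0 < c := by positivity
  set G : ℕ → ℝ := fun m => ∑ j ∈ Finset.range m, r ^ j with hGdef
  have hGnonneg : ∀ m, 0 ≤ G m := fun m =>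
    Finset.sum_nonneg fun j _ => pow_nonneg hrpos.le j
  set A : ℕ → ℝ := fun m => ∑ j ∈ Finset.range m, (n (2*j) : ℝ) with hAdef
  set B : ℕ → ℝ := fun m => ∑ j ∈ Finset.range m, (n (2*j+1) : ℝ) with hBdef
  -- floor error bound
  have key : ∀ x : ℝ, |(⌊x⌋ : ℝ) - x| ≤ 1 := by
    intro x
    have h1 := Int.floor_le x
    have h2 := Int.sub_one_lt_floor x
    rw [abs_le]; constructor <;> linarith
  have hevR : ∀ j : ℕ, |(n (2*j) : ℝ) - c * r ^ j| ≤ 1 := by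
    intro j
    have hx : (n0 : ℝ) * α ^ (q+j) * β ^ (q+j) = c * r ^ j := by
      rw [hcdef, hrdef]; ring
    rw [heven j, hx]
    exact key _
  have hodR : ∀ j : ℕ, |(n (2*j+1) : ℝ) - c * α * r ^ j| ≤ 1 := by
    intro j
    have hx : (n0 : ℝ) * α ^ (q+j+1) * β ^ (q+j) = c * α * r ^ j := by
      rw [hcdef, hrdef]; ring
    rw [hodd j, hx]
    exact key _
  have hA : ∀ m : ℕ, |A m - c * G m| ≤ m := by
    intro m
    have : A m - c * G m = ∑ j ∈ Finset.range m, ((n (2*j) : ℝ) - c * r ^ j) := by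
      rw [hAdef, hGdef, Finset.mul_sum, ← Finset.sum_sub_distrib]
    rw [this]
    calc |∑ j ∈ Finset.range m, ((n (2*j) : ℝ) - c * r ^ j)|
        ≤ ∑ j ∈ Finset.range m, |(n (2*j) : ℝ) - c * r ^ j| :=
          Finset.abs_sum_le_sum_abs _ _
      _ ≤ ∑ _j ∈ Finset.range m, (1:ℝ) := Finset.sum_le_sum fun j _ => hevR j
      _ = m := by simp
  have hB : ∀ m : ℕ, |B m - c * α * G m| ≤ m := by
    intro m
    have : B m - c * α * G m = ∑ j ∈ Finset.range m, ((n (2*j+1) : ℝ) - c * α * r ^ j) := by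
      rw [hBdef, hGdef, Finset.mul_sum, ← Finset.sum_sub_distrib]
    rw [this]
    calc |∑ j ∈ Finset.range m, ((n (2*j+1) : ℝ) - c * α * r ^ j)|
        ≤ ∑ j ∈ Finset.range m, |(n (2*j+1) : ℝ) - c * α * r ^ j| :=
          Finset.abs_sum_le_sum_abs _ _
      _ ≤ ∑ _j ∈ Finset.range m, (1:ℝ) := Finset.sum_le_sum fun j _ => hodR j
      _ = m := by simp
  -- m / (c * G m) → 0
  have hGpos : ∀ m : ℕ, 1 ≤ m → 0 < G m := by
    intro m hm
    rw [hGdef]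
    apply Finset.sum_pos (fun j _ => pow_pos hrpos j)
    exact Finset.nonempty_range_iff.mpr (by omega)
  have h0 : Tendsto (fun m : ℕ => (m : ℝ) / (c * G m)) atTop (𝓝 0) := by
    have hlim : Tendsto (fun m : ℕ => (r / c) * ((m : ℝ) / r ^ m)) atTop (𝓝 0) := by
      have := (tendsto_pow_const_div_const_pow_of_one_lt 1 hr1).const_mul (r / c)
      simpa using this
    apply squeeze_zero' ?_ ?_ hlim
    · filter_upwards with m
      exact div_nonneg (Nat.cast_nonneg m) (mul_nonneg hc.le (hGnonneg m))
    · filter_upwards [eventually_ge_atTop 1] with m hm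
      obtain ⟨k, rfl⟩ : ∃ k, m = k + 1 := ⟨m - 1, (Nat.succ_pred_eq_of_pos hm).symm⟩
      have hGk : r ^ k ≤ G (k+1) :=
        Finset.single_le_sum (f := fun j => r ^ j)
          (fun i _ => pow_nonneg hrpos.le i) (Finset.self_mem_range_succ k)
      have heq : (r / c) * (((k+1 : ℕ) : ℝ) / r ^ (k+1)) = ((k+1:ℕ) : ℝ) / (c * r ^ k) := by
        rw [pow_succ]
        field_simp
      rw [heq]
      gcongr
  -- A m / (c G m) → 1
  have haux : ∀ (F : ℕ → ℝ) (d : ℝ), (∀ m : ℕ, |F m - c * d * G m| ≤ m) →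
      Tendsto (fun m => F m / (c * G m)) atTop (𝓝 d) := by
    intro F d hF
    have h1 : Tendsto (fun m => (F m - c * d * G m) / (c * G m)) atTop (𝓝 0) := by
      apply squeeze_zero_norm' ?_ h0
      filter_upwards [eventually_ge_atTop 1] with m hm
      have hg : 0 < c * G m := mul_pos hc (hGpos m hm)
      rw [Real.norm_eq_abs, abs_div, abs_of_pos hg]
      exact div_le_div_of_nonneg_right (hF m) hg.le
    have h2 := h1.add (tendsto_const_nhds (x := d))
    rw [zero_add] at h2
    apply h2.congr'
    filter_upwards [eventually_ge_atTop 1] with m hm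
    have hg : (c * G m) ≠ 0 := (mul_pos hc (hGpos m hm)).ne'
    field_simp
    rw [sub_div, mul_div_cancel_right₀ _ (hGpos m hm).ne']
    ring
  have ha : Tendsto (fun m => A m / (c * G m)) atTop (𝓝 1) := by
    have := haux A 1 (by intro m; simpa using hA m)
    simpa using this
  have hb : Tendsto (fun m => B m / (c * G m)) atTop (𝓝 α) := haux B α (hB)
  -- combine
  have hnum : Tendsto (fun m => B m / (c * G m) * Real.log lamu +
      A m / (c * G m) * Real.log lams) atTop
      (𝓝 (α * Real.log lamu + 1 * Real.log lams)) :=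
    (hb.mul tendsto_const_nhds).add (ha.mul tendsto_const_nhds)
  have hden : Tendsto (fun m => (A m + B m) / (c * G m)) atTop (𝓝 (1 + α)) := by
    have := ha.add hb
    apply this.congr
    intro m
    rw [add_div]
  have hne : (1 + α) ≠ 0 := by linarith
  have hsplit : ∀ m : ℕ, ∑ j ∈ Finset.range (2*m), (n j : ℝ) = A m + B m := by
    intro m
    rw [hAdef, hBdef]
    induction m with
    | zero => simp
    | succ k ih =>
      rw [show 2 * (k+1) = 2*k + 1 + 1 by ring, Finset.sum_range_succ, Finset.sum_range_succ, ih]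
      simp only [Finset.sum_range_succ]
      ring
  have hfin := hnum.div hden hne
  rw [one_mul] at hfin
  apply hfin.congr'
  filter_upwards [eventually_ge_atTop 1] with m hm
  have hg : (c * G m) ≠ 0 := (mul_pos hc (hGpos m hm)).ne'
  have hnumeq : ∑ j ∈ Finset.range m,
      ((n (2*j+1) : ℝ) * Real.log lamu + (n (2*j) : ℝ) * Real.log lams)
      = B m * Real.log lamu + A m * Real.log lams := by
    rw [hAdef, hBdef, Finset.sum_add_distrib, Finset.sum_mul, Finset.sum_mul]
  have hcancel : ∀ x y : ℝ, (x / (c * G m)) / (y / (c * G m)) = x / y := by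
    intro x y
    rcases eq_or_ne y 0 with rfl | hy
    · simp
    · field_simp
      exact mul_div_cancel_right₀ x (hGpos m hm).ne'
  simp only [Pi.div_apply]
  rw [hnumeq, hsplit m, div_mul_eq_mul_div, div_mul_eq_mul_div, ← add_div, hcancel]
end

section
/- With the same setup, lim_{m→∞} log Λ_u^{(2m−1)} / S_{2m−1} = (β log λ_u + log λ_s)/(1+β), where log Λ_u^{(2m−1)} = Σ_{j=0}^{m−1} n_{2j} log λ_u + Σ_{j=0}^{m−2} n_{2j+1} log λ_s and S_{2m−1} = Σ_{j=0}^{2m−2} n_j. -/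
open Filter Finset Real

private lemma sum_range_odd_split (f : ℕ → ℝ) (k : ℕ) :
    ∑ j ∈ Finset.range (2*k+1), f j
      = ∑ j ∈ Finset.range (k+1), f (2*j) + ∑ j ∈ Finset.range k, f (2*j+1) := by
  induction k with
  | zero => simp
  | succ k ih =>
    have h1 : 2*(k+1)+1 = (2*k+1)+1+1 := by ring
    rw [h1, Finset.sum_range_succ, Finset.sum_range_succ, ih,
      Finset.sum_range_succ (f := fun j => f (2*j)) (n := k+1),
      Finset.sum_range_succ (f := fun j => f (2*j+1)) (n := k)]
    have h2 : 2*(k+1) = 2*k+1+1 := by ring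
    rw [h2]
    ring

private lemma geom_div_tendsto {r : ℝ} (hr : 1 < r) :
    Tendsto (fun m : ℕ => (∑ j ∈ Finset.range m, r^j) / r^m) atTop (nhds (1/(r-1))) := by
  have hr0 : (0:ℝ) < r := by linarith
  have hrne : r ≠ 1 := ne_of_gt hr
  have hi0 : (0:ℝ) ≤ r⁻¹ := by positivity
  have hi1 : r⁻¹ < 1 := by
    rw [inv_lt_one_iff₀]; right; exact hr
  have hpow : Tendsto (fun m : ℕ => (r⁻¹)^m) atTop (nhds 0) :=
    tendsto_pow_atTop_nhds_zero_of_lt_one hi0 hi1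
  have h := (tendsto_const_nhds (α := ℕ) (f := atTop) (x := (1:ℝ))).sub hpow |>.div_const (r-1)
  simp only [sub_zero] at h
  refine h.congr fun m => ?_
  have hpm : r^m ≠ 0 := by positivity
  rw [geom_sum_eq hrne]
  have hx : (r^m - 1)/r^m = 1 - r⁻¹^m := by
    rw [sub_div, div_self hpm, one_div, inv_pow]
  rw [← hx, div_div, div_div, mul_comm]

private lemma floor_sum_div_tendsto {r : ℝ} (hr : 1 < r) (c : ℝ) :
    Tendsto (fun m : ℕ => (∑ j ∈ Finset.range m, (⌊c * r^j⌋ : ℝ)) / r^m) atTop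
      (nhds (c/(r-1))) := by
  have hr0 : (0:ℝ) < r := by linarith
  have hi0 : (0:ℝ) ≤ r⁻¹ := by positivity
  have hi1 : r⁻¹ < 1 := by rw [inv_lt_one_iff₀]; right; exact hr
  have herr : Tendsto
      (fun m : ℕ => (∑ j ∈ Finset.range m, (c*r^j - (⌊c * r^j⌋ : ℝ))) / r^m) atTop
      (nhds 0) := by
    apply squeeze_zero (g := fun m : ℕ => (m : ℝ) * (r⁻¹)^m)
    · intro m
      apply div_nonneg _ (by positivity)
      exact Finset.sum_nonneg fun j _ => sub_nonneg.2 (Int.floor_le _)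
    · intro m
      have hb : (∑ j ∈ Finset.range m, (c*r^j - (⌊c * r^j⌋ : ℝ))) ≤ m := by
        calc (∑ j ∈ Finset.range m, (c*r^j - (⌊c * r^j⌋ : ℝ)))
            ≤ ∑ j ∈ Finset.range m, (1:ℝ) :=
              Finset.sum_le_sum fun j _ => by
                have := Int.lt_floor_add_one (c * r^j); linarith
          _ = m := by simp
      have hpm : (0:ℝ) < r^m := by positivity
      calc (∑ j ∈ Finset.range m, (c*r^j - (⌊c * r^j⌋ : ℝ))) / r^m
          ≤ (m:ℝ) / r^m := by exact div_le_div_of_nonneg_right hb hpm.le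
        _ = (m:ℝ) * (r⁻¹)^m := by rw [inv_pow, div_eq_mul_inv]
    · exact tendsto_self_mul_const_pow_of_lt_one hi0 hi1
  have h := ((geom_div_tendsto hr).const_mul c).sub herr
  rw [sub_zero] at h
  have hlim : c * (1/(r-1)) = c/(r-1) := by ring
  rw [hlim] at h
  refine h.congr fun m => ?_
  have key : (∑ j ∈ Finset.range m, (⌊c * r^j⌋ : ℝ))
      = c * (∑ j ∈ Finset.range m, r^j) - ∑ j ∈ Finset.range m, (c*r^j - (⌊c * r^j⌋ : ℝ)) := by
    rw [Finset.mul_sum, ← Finset.sum_sub_distrib]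
    exact Finset.sum_congr rfl fun j _ => by ring
  rw [key, sub_div, mul_div_assoc]

theorem stmt_13 (α β lams lamu : ℝ) (n0 q : ℕ) (hn0 : 0 < n0)
    (hα : 1 < α) (hαβ : α < β)
    (hs0 : 0 < lams) (hs1 : lams < 1) (hu : 1 < lamu)
    (n : ℕ → ℤ)
    (heven : ∀ p : ℕ, n (2*p) = ⌊(n0 : ℝ) * α^(q+p) * β^(q+p)⌋)
    (hodd : ∀ p : ℕ, n (2*p+1) = ⌊(n0 : ℝ) * α^(q+p+1) * β^(q+p)⌋) :
    Filter.Tendsto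
      (fun m : ℕ =>
        (∑ j ∈ Finset.range m, (n (2*j) : ℝ) * Real.log lamu
          + ∑ j ∈ Finset.range (m-1), (n (2*j+1) : ℝ) * Real.log lams)
        / (∑ j ∈ Finset.range (2*m-1), (n j : ℝ)))
      Filter.atTop
      (nhds ((β * Real.log lamu + Real.log lams) / (1 + β))) := by
  have hβ : 1 < β := hα.trans hαβ
  set r : ℝ := α * β with hrdef
  have hr : 1 < r := by nlinarith
  have hr0 : (0:ℝ) < r := by linarith
  have hα0 : (0:ℝ) < α := by linarith
  have hβ0 : (0:ℝ) < β := by linarith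
  set c0 : ℝ := (n0 : ℝ) * r^q with hc0def
  have hc0 : 0 < c0 := by
    have : (0:ℝ) < (n0:ℝ) := by exact_mod_cast hn0
    positivity
  -- rewrite floors
  have heven' : ∀ p : ℕ, (n (2*p) : ℝ) = (⌊c0 * r^p⌋ : ℝ) := by
    intro p
    rw [heven p]
    congr 2
    rw [hc0def, hrdef, mul_pow, mul_pow, pow_add, pow_add]
    ring
  have hodd' : ∀ p : ℕ, (n (2*p+1) : ℝ) = (⌊(c0*α) * r^p⌋ : ℝ) := by
    intro p
    rw [hodd p]
    congr 2
    rw [hc0def, hrdef, mul_pow, mul_pow, pow_add, pow_add]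
    ring
  -- limits of partial sums divided by r^m
  have hP : Tendsto (fun m : ℕ => (∑ j ∈ Finset.range m, (n (2*j) : ℝ)) / r^m) atTop
      (nhds (c0/(r-1))) := by
    refine (floor_sum_div_tendsto hr c0).congr fun m => ?_
    congr 1
    exact Finset.sum_congr rfl fun j _ => (heven' j).symm
  have hQ : Tendsto (fun m : ℕ => (∑ j ∈ Finset.range m, (n (2*j+1) : ℝ)) / r^m) atTop
      (nhds ((c0*α)/(r-1))) := by
    refine (floor_sum_div_tendsto hr (c0*α)).congr fun m => ?_
    congr 1
    exact Finset.sum_congr rfl fun j _ => (hodd' j).symm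
  -- shifted odd sum
  have hQ' : Tendsto (fun m : ℕ => (∑ j ∈ Finset.range (m-1), (n (2*j+1) : ℝ)) / r^m) atTop
      (nhds ((c0*α)/(r-1) * r⁻¹)) := by
    have h1 := (hQ.comp (tendsto_sub_atTop_nat 1)).mul_const r⁻¹
    refine h1.congr' ?_
    filter_upwards [eventually_ge_atTop 1] with m hm
    have h2 : m - 1 + 1 = m := Nat.succ_pred_eq_of_pos hm
    have hpm : r^(m-1) ≠ 0 := by positivity
    simp only [Function.comp]
    rw [← div_eq_mul_inv, div_div, ← pow_succ, h2]
  -- numerator and denominator limits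
  have hNum : Tendsto (fun m : ℕ =>
      (∑ j ∈ Finset.range m, (n (2*j) : ℝ) * Real.log lamu
        + ∑ j ∈ Finset.range (m-1), (n (2*j+1) : ℝ) * Real.log lams) / r^m) atTop
      (nhds (c0/(r-1) * Real.log lamu + (c0*α)/(r-1) * r⁻¹ * Real.log lams)) := by
    have h := (hP.mul_const (Real.log lamu)).add (hQ'.mul_const (Real.log lams))
    refine h.congr fun m => ?_
    rw [add_div, ← Finset.sum_mul, ← Finset.sum_mul]
    ring
  have hDen : Tendsto (fun m : ℕ =>
      (∑ j ∈ Finset.range (2*m-1), (n j : ℝ)) / r^m) atTop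
      (nhds (c0/(r-1) + (c0*α)/(r-1) * r⁻¹)) := by
    have h := hP.add hQ'
    refine h.congr' ?_
    filter_upwards [eventually_ge_atTop 1] with m hm
    have h2 : 2*m - 1 = 2*(m-1)+1 := by omega
    have h3 : m - 1 + 1 = m := Nat.succ_pred_eq_of_pos hm
    rw [h2, sum_range_odd_split (fun j => (n j : ℝ)) (m-1), h3, add_div]
  -- denominator limit is nonzero
  have hr1 : (0:ℝ) < r - 1 := by linarith
  have hB : (0:ℝ) < c0/(r-1) + (c0*α)/(r-1) * r⁻¹ := by positivity
  have hmain := hNum.div hDen (ne_of_gt hB)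
  have hval : (c0/(r-1) * Real.log lamu + (c0*α)/(r-1) * r⁻¹ * Real.log lams)
      / (c0/(r-1) + (c0*α)/(r-1) * r⁻¹)
      = (β * Real.log lamu + Real.log lams) / (1 + β) := by
    rw [div_eq_div_iff (ne_of_gt hB) (by positivity)]
    have hrne : r ≠ 0 := ne_of_gt hr0
    have hr1ne : r - 1 ≠ 0 := ne_of_gt hr1
    field_simp
    rw [hrdef]
    ring
  rw [hval] at hmain
  refine hmain.congr fun m => ?_
  have hpm : r^m ≠ 0 := by positivity
  simp only [Pi.div_apply]
  rw [div_div_div_comm, div_self hpm, div_one]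
end
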